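/- The three sets {2⌊nφ⌋ − n : n ≥ 1}, {4⌊nφ⌋ + 3n + 2 : n ≥ 0}, and {2⌊nφ⌋ − n + 2 : n ≥ 1} are pairwise disjoint and their union is the set of all positive integers; i.e., the sequences (2⌊nφ⌋ − n)_{n≥1}, (4⌊nφ⌋ + 3n + 2)_{n≥0}, and (2⌊nφ⌋ − n + 2)_{n≥1} form a complementary triple. -/

import Mathlib

/-!
Write `s = √5`, so that `2nφ - n = ns`. Then `z = 2⌊nφ⌋ - n` exactly when `z ≡ n (mod 2)` and
`z ≤ ns < z + 2`: the first and third sequences consist of the integers lying just below, resp.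
just above, some `ns` with `n ≡ z (mod 2)`. For a term `z = 2a + 5m + 2` of the second sequence
(`a = 2⌊mφ⌋ - m`), the only `n` with `|ns - z| < 2` is `n = a + 2m + 1`, of the wrong parity.
Conversely, a positive `z` that is close to `ns` only for `n` of the wrong parity is recovered
from `m = z - 2n` and `a = 5n - 2z - 1`, because `ms - a = (2 + √5)(√5 - 2 - (ns - z))` and
`2 + √5 = φ³` is a unit with inverse `√5 - 2`.
-/

noncomputable def phi : ℝ := (1 + Real.sqrt 5) / 2

lemma two_lt_sqrt_five : 2 < √5 := by
  rw [Real.lt_sqrt (by norm_num)]; norm_num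

lemma eq_zero_of_intCast_mul_sqrt_five_eq {n z : ℤ} (h : (n : ℝ) * √5 = z) : n = 0 := by
  by_contra hn
  have hirr : Irrational √5 := by simpa using Nat.prime_five.irrational_sqrt
  exact (hirr.intCast_mul hn).ne_int z h

lemma natCast_le_floor_mul_phi (n : ℕ) : (n : ℤ) ≤ ⌊(n : ℝ) * phi⌋ :=
  Int.le_floor.2 <| by
    push_cast; exact le_mul_of_one_le_right n.cast_nonneg Real.one_lt_goldenRatio.le

lemma eq_two_mul_floor_mul_phi_sub_iff (n z : ℤ) :
    z = 2 * ⌊(n : ℝ) * phi⌋ - n ↔ Even (z + n) ∧ (z : ℝ) ≤ n * √5 ∧ n * √5 < z + 2 := by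
  have hphi : (n : ℝ) * phi = (n + n * √5) / 2 := by unfold phi; ring
  constructor
  · rintro rfl
    have h₁ := Int.floor_le ((n : ℝ) * phi)
    have h₂ := Int.lt_floor_add_one ((n : ℝ) * phi)
    refine ⟨⟨⌊(n : ℝ) * phi⌋, by ring⟩, ?_, ?_⟩ <;> push_cast <;> linarith
  · rintro ⟨⟨f, hf⟩, h₁, h₂⟩
    have hfR : (z : ℝ) + n = f + f := by exact_mod_cast hf
    have : ⌊(n : ℝ) * phi⌋ = f := by
      rw [Int.floor_eq_iff, hphi]
      constructor <;> linarith
    omega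

lemma eq_add_two_mul_add_one_of_abs_lt {a m n : ℤ} (h₁ : (a : ℝ) ≤ m * √5)
    (h₂ : m * √5 < a + 2) (h : |n * √5 - (2 * a + 5 * m + 2)| < 2) : n = a + 2 * m + 1 := by
  have hs := two_lt_sqrt_five
  obtain ⟨i, rfl⟩ : ∃ i : ℤ, n = i + a + 2 * m := ⟨n - a - 2 * m, by ring⟩
  have key : ((i + a + 2 * m : ℤ) : ℝ) * √5 - (2 * a + 5 * m + 2)
      = i * √5 - (m * √5 - a) * (√5 - 2) - 2 := by
    push_cast
    linear_combination (m : ℝ) * Real.sq_sqrt (show (0 : ℝ) ≤ 5 by norm_num)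
  rw [key, abs_lt] at h
  have ht₀ : 0 ≤ (m * √5 - a) * (√5 - 2) := mul_nonneg (by linarith) (by linarith)
  have ht₂ : (m * √5 - a) * (√5 - 2) < 2 * (√5 - 2) :=
    mul_lt_mul_of_pos_right (by linarith) (by linarith)
  have hi₀ : (0 : ℝ) < i := pos_of_mul_pos_left (by linarith) (by linarith : (0 : ℝ) ≤ √5)
  have hi₂ : (i : ℝ) < 2 := lt_of_mul_lt_mul_right (by linarith) (by linarith : (0 : ℝ) ≤ √5)
  have : 0 < i := by exact_mod_cast hi₀
  have : i < 2 := by exact_mod_cast hi₂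
  omega

lemma two_le_abs_mul_sqrt_five_sub {m n z : ℤ} (hz : z = 4 * ⌊(m : ℝ) * phi⌋ + 3 * m + 2)
    (hzn : Even (z + n)) : 2 ≤ |n * √5 - z| := by
  obtain ⟨ha, h₁, h₂⟩ := (eq_two_mul_floor_mul_phi_sub_iff m (2 * ⌊(m : ℝ) * phi⌋ - m)).1 rfl
  have hzR : (z : ℝ) = 2 * ((2 * ⌊(m : ℝ) * phi⌋ - m : ℤ) : ℝ) + 5 * m + 2 := by
    rw [hz]; push_cast; ring
  by_contra! h
  rw [hzR] at h
  have hn := eq_add_two_mul_add_one_of_abs_lt h₁ h₂ h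
  rw [Int.even_iff] at ha hzn
  omega

lemma two_mul_floor_mul_phi_sub_ne_add_two (n n' : ℤ) :
    2 * ⌊(n : ℝ) * phi⌋ - n ≠ 2 * ⌊(n' : ℝ) * phi⌋ - n' + 2 := by
  intro h
  obtain ⟨hn, h₁, h₂⟩ := (eq_two_mul_floor_mul_phi_sub_iff n _).1 rfl
  obtain ⟨hn', h₁', h₂'⟩ :=
    (eq_two_mul_floor_mul_phi_sub_iff n' (2 * ⌊(n : ℝ) * phi⌋ - n - 2)).1 (by omega)
  generalize 2 * ⌊(n : ℝ) * phi⌋ - n = z at *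
  push_cast at h₁' h₂'
  have hs := two_lt_sqrt_five
  have hlt : (n' : ℝ) < n := lt_of_mul_lt_mul_right (by linarith) (by linarith : (0 : ℝ) ≤ √5)
  have hle : (2 : ℝ) ≤ n - n' := by
    have : n' < n := by exact_mod_cast hlt
    rw [Int.even_iff] at hn hn'
    exact_mod_cast (by omega : 2 ≤ n - n')
  nlinarith

lemma four_mul_floor_mul_phi_add_ne (m n : ℤ) :
    4 * ⌊(m : ℝ) * phi⌋ + 3 * m + 2 ≠ 2 * ⌊(n : ℝ) * phi⌋ - n := by
  intro h
  obtain ⟨hzn, h₁, h₂⟩ := (eq_two_mul_floor_mul_phi_sub_iff n _).1 h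
  have := two_le_abs_mul_sqrt_five_sub rfl hzn
  exact this.not_gt (abs_sub_lt_iff.2 ⟨by linarith, by linarith⟩)

lemma four_mul_floor_mul_phi_add_ne_add_two (m : ℤ) {n : ℤ} (hn : n ≠ 0) :
    4 * ⌊(m : ℝ) * phi⌋ + 3 * m + 2 ≠ 2 * ⌊(n : ℝ) * phi⌋ - n + 2 := by
  intro h
  obtain ⟨hzn, h₁, h₂⟩ :=
    (eq_two_mul_floor_mul_phi_sub_iff n (4 * ⌊(m : ℝ) * phi⌋ + 3 * m + 2 - 2)).1 (by omega)
  have := two_le_abs_mul_sqrt_five_sub (m := m) rfl (n := n)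
    (by rw [Int.even_iff] at hzn ⊢; omega)
  generalize 4 * ⌊(m : ℝ) * phi⌋ + 3 * m + 2 = z at *
  push_cast at h₁ h₂
  have h₁' : (z : ℝ) - 2 < n * √5 := h₁.lt_of_ne fun h =>
    hn (eq_zero_of_intCast_mul_sqrt_five_eq (z := z - 2) (by push_cast; exact h.symm))
  exact this.not_gt (abs_sub_lt_iff.2 ⟨by linarith, by linarith⟩)

lemma exists_nat_eq_two_mul_floor_sub {n z : ℤ} (hn : 0 < n) (hzn : Even (z + n))
    (h₁ : (z : ℝ) ≤ n * √5) (h₂ : n * √5 < z + 2) :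
    ∃ k : ℕ, 1 ≤ k ∧ z = 2 * ⌊(k : ℝ) * phi⌋ - k := by
  lift n to ℕ using hn.le
  exact ⟨n, by omega, by simpa using (eq_two_mul_floor_mul_phi_sub_iff n z).2 ⟨hzn, h₁, h₂⟩⟩

lemma exists_nat_eq_four_mul_floor_add {n z : ℤ} (hz : 0 < z) (hnz : Odd (n + z))
    (h₁ : 2 - √5 < n * √5 - z) (h₂ : n * √5 - z ≤ √5 - 2) :
    ∃ m : ℕ, z = 4 * ⌊(m : ℝ) * phi⌋ + 3 * m + 2 := by
  have hs := two_lt_sqrt_five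
  have hsq : √5 ^ 2 = 5 := Real.sq_sqrt (by norm_num)
  have key : ((z - 2 * n : ℤ) : ℝ) * √5 - ((5 * n - 2 * z - 1 : ℤ) : ℝ)
      = (√5 + 2) * (√5 - 2 - (n * √5 - z)) := by
    push_cast
    linear_combination ((n : ℝ) - 1) * hsq
  have hlo : ((5 * n - 2 * z - 1 : ℤ) : ℝ) ≤ ((z - 2 * n : ℤ) : ℝ) * √5 := by
    have : 0 ≤ (√5 + 2) * (√5 - 2 - (n * √5 - z)) := mul_nonneg (by linarith) (by linarith)
    linarith
  have hhi : ((z - 2 * n : ℤ) : ℝ) * √5 < ((5 * n - 2 * z - 1 : ℤ) : ℝ) + 2 := by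
    have : (√5 + 2) * (√5 - 2 - (n * √5 - z)) < (√5 + 2) * (2 * (√5 - 2)) :=
      mul_lt_mul_of_pos_left (by linarith) (by linarith)
    have : (√5 + 2) * (2 * (√5 - 2)) = 2 := by linear_combination 2 * hsq
    linarith
  have ha := (eq_two_mul_floor_mul_phi_sub_iff (z - 2 * n) (5 * n - 2 * z - 1)).2
    ⟨by rw [Int.odd_iff] at hnz; rw [Int.even_iff]; omega, hlo, hhi⟩
  have hm : 0 ≤ z - 2 * n := by
    by_contra! hm
    have : ((z - 2 * n : ℤ) : ℝ) ≤ -1 := by exact_mod_cast (by omega : z - 2 * n ≤ -1)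
    have : ((5 * n - 2 * z - 1 : ℤ) : ℝ) < -2 := by nlinarith
    have : 5 * n - 2 * z - 1 < -2 := by exact_mod_cast this
    omega
  obtain ⟨m, hm⟩ := Int.eq_ofNat_of_zero_le hm
  refine ⟨m, ?_⟩
  rw [hm] at ha
  push_cast at ha
  omega

lemma exists_floor_mul_phi_repr_of_pos {z : ℤ} (hz : 0 < z) :
    (∃ n : ℕ, 1 ≤ n ∧ z = 2 * ⌊(n : ℝ) * phi⌋ - n) ∨
      (∃ n : ℕ, z = 4 * ⌊(n : ℝ) * phi⌋ + 3 * n + 2) ∨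
      ∃ n : ℕ, 1 ≤ n ∧ z = 2 * ⌊(n : ℝ) * phi⌋ - n + 2 := by
  have hs := two_lt_sqrt_five
  have hs₀ : (0 : ℝ) < √5 := by linarith
  obtain ⟨k, hk₀, hk₁, hk₂⟩ : ∃ k : ℤ, 0 ≤ k ∧ (k : ℝ) * √5 ≤ z ∧ (z : ℝ) < (k + 1) * √5 :=
    ⟨⌊(z : ℝ) / √5⌋, Int.floor_nonneg.2 (by positivity), (le_div_iff₀ hs₀).1 (Int.floor_le _),
      (div_lt_iff₀ hs₀).1 (Int.lt_floor_add_one _)⟩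
  rcases Int.even_or_odd (z + k) with hzk | hzk
  · by_cases hd : (z : ℝ) < k * √5 + 2
    · have hk : 0 < k := by
        by_contra! hk
        obtain rfl : k = 0 := by omega
        have : z < 2 := by exact_mod_cast (by simpa using hd : (z : ℝ) < 2)
        rw [Int.even_iff] at hzk
        omega
      have hk₁' : (k : ℝ) * √5 < z :=
        hk₁.lt_of_ne fun h => hk.ne' (eq_zero_of_intCast_mul_sqrt_five_eq h)
      obtain ⟨n, hn, he⟩ := exists_nat_eq_two_mul_floor_sub hk (z := z - 2)
        (by rw [Int.even_iff] at hzk ⊢; omega) (by push_cast; linarith) (by push_cast; linarith)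
      exact Or.inr (Or.inr ⟨n, hn, by omega⟩)
    · exact Or.inr (Or.inl (exists_nat_eq_four_mul_floor_add hz (n := k + 1)
        (by rw [Int.even_iff] at hzk; rw [Int.odd_iff]; omega) (by push_cast; linarith)
        (by push_cast; linarith)))
  · have hne : ((k + 1 : ℤ) : ℝ) * √5 ≠ ((z + 2 : ℤ) : ℝ) := fun h => by
      have := eq_zero_of_intCast_mul_sqrt_five_eq h
      omega
    push_cast at hne
    rcases hne.lt_or_gt with hd | hd
    · exact Or.inl (exists_nat_eq_two_mul_floor_sub (n := k + 1) (by omega)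
        (by rw [Int.odd_iff] at hzk; rw [Int.even_iff]; omega) (by push_cast; linarith)
        (by push_cast; linarith))
    · exact Or.inr (Or.inl (exists_nat_eq_four_mul_floor_add hz (n := k) (by rwa [add_comm])
        (by linarith) (by linarith)))

theorem nonclassical_triple :
    Disjoint {z : ℤ | ∃ n : ℕ, 1 ≤ n ∧ z = 2 * ⌊(n : ℝ) * phi⌋ - n}
      {z : ℤ | ∃ n : ℕ, z = 4 * ⌊(n : ℝ) * phi⌋ + 3 * n + 2} ∧
    Disjoint {z : ℤ | ∃ n : ℕ, 1 ≤ n ∧ z = 2 * ⌊(n : ℝ) * phi⌋ - n}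
      {z : ℤ | ∃ n : ℕ, 1 ≤ n ∧ z = 2 * ⌊(n : ℝ) * phi⌋ - n + 2} ∧
    Disjoint {z : ℤ | ∃ n : ℕ, z = 4 * ⌊(n : ℝ) * phi⌋ + 3 * n + 2}
      {z : ℤ | ∃ n : ℕ, 1 ≤ n ∧ z = 2 * ⌊(n : ℝ) * phi⌋ - n + 2} ∧
    {z : ℤ | ∃ n : ℕ, 1 ≤ n ∧ z = 2 * ⌊(n : ℝ) * phi⌋ - n} ∪
      {z : ℤ | ∃ n : ℕ, z = 4 * ⌊(n : ℝ) * phi⌋ + 3 * n + 2} ∪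
      {z : ℤ | ∃ n : ℕ, 1 ≤ n ∧ z = 2 * ⌊(n : ℝ) * phi⌋ - n + 2} = {z : ℤ | 0 < z} := by
  refine ⟨Set.disjoint_left.2 ?_, Set.disjoint_left.2 ?_, Set.disjoint_left.2 ?_, ?_⟩
  · rintro _ ⟨n, -, rfl⟩ ⟨m, h⟩
    exact four_mul_floor_mul_phi_add_ne m n (by exact_mod_cast h.symm)
  · rintro _ ⟨n, -, rfl⟩ ⟨n', -, h⟩
    exact two_mul_floor_mul_phi_sub_ne_add_two n n' (by exact_mod_cast h)
  · rintro _ ⟨m, rfl⟩ ⟨n, hn, h⟩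
    exact four_mul_floor_mul_phi_add_ne_add_two m (n := n) (by omega) (by exact_mod_cast h)
  · ext z
    simp only [Set.mem_union, Set.mem_ofPred_eq]
    refine ⟨?_, fun hz => or_assoc.2 (exists_floor_mul_phi_repr_of_pos hz)⟩
    rintro ((⟨n, hn, rfl⟩ | ⟨n, rfl⟩) | ⟨n, hn, rfl⟩) <;>
      have := natCast_le_floor_mul_phi n <;> omega
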